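/- Let $T_{\alpha,w,\infty}$ be a weighted composition operator on $L^\infty(\Omega,\mu)$ (with $w$ bounded positive and $\alpha$ bi-measurable norm-preserving), and let $F\subseteq\Omega$ be Borel with $0<\mu(F)<\infty$. Suppose there is $N>0$ with $\alpha^n(F)\cap F=\varnothing$ for all $n\geq N$, and $\beta:=\inf\{\prod_{k=1}^n(w\circ\alpha^{-k})(t): n\geq N, t\in F\}>0$. Then $\{f\in L^\infty(\Omega,\mu): \|T_{\alpha,w,\infty}^n f-\chi_F\|_\infty\geq 1 \text{ for all } n\geq N\}$ is not $\sigma$-porous in $L^\infty(\Omega,\mu)$. -/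

import Mathlib

open MeasureTheory Metric Set ENNReal

/-- `E` is `lam`-porous at `x`: for every `δ > 0` there is `y ∈ B(x;δ) \ {x}` with
`B(y; lam * d(x,y)) ∩ E = ∅`. -/
def PorousAt {X : Type*} [PseudoMetricSpace X] (lam : ℝ) (E : Set X) (x : X) : Prop :=
  ∀ δ > 0, ∃ y ∈ Metric.ball x δ, y ≠ x ∧ Metric.ball y (lam * dist x y) ∩ E = ∅

/-- `E` is `lam`-porous if it is `lam`-porous at each of its points. -/
def Porous {X : Type*} [PseudoMetricSpace X] (lam : ℝ) (E : Set X) : Prop :=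
  ∀ x ∈ E, PorousAt lam E x

/-- `E` is `σ`-`lam`-porous if it is a countable union of `lam`-porous sets. -/
def SigmaPorousFor {X : Type*} [PseudoMetricSpace X] (lam : ℝ) (E : Set X) : Prop :=
  ∃ S : ℕ → Set X, (∀ n, Porous lam (S n)) ∧ E = ⋃ n, S n

/-- `E` is `σ`-porous if it is a countable union of sets, each `lam`-porous for
some `0 < lam < 1`. -/
def SigmaPorous {X : Type*} [PseudoMetricSpace X] (E : Set X) : Prop :=
  ∃ S : ℕ → Set X, (∀ n, ∃ lam : ℝ, 0 < lam ∧ lam < 1 ∧ Porous lam (S n)) ∧ E = ⋃ n, S n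

/-- The `n`-th power of the weighted composition operator `T_{α,w} f = w · (f ∘ α)`, computed
pointwise: `(T^n f)(x) = (∏_{k=0}^{n-1} w(α^k x)) f(α^n x)`. -/
noncomputable def TinfPow {Ω : Type*} (α : Ω ≃ Ω) (w : Ω → ℝ) (n : ℕ) (f : Ω → ℂ) :
    Ω → ℂ :=
  fun x => (∏ k ∈ Finset.range n, (w ((⇑α)^[k] x) : ℂ)) * f ((⇑α)^[n] x)

lemma Porous.isNowhereDense' {X : Type*} [MetricSpace X] {lam : ℝ} (h0 : 0 < lam)
    (h1 : lam < 1) {S : Set X} (hp : Porous lam S) : IsNowhereDense S := by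
  rw [IsNowhereDense, Set.eq_empty_iff_forall_notMem]
  intro z hz
  obtain ⟨ε, hε, hball⟩ := Metric.isOpen_iff.1 isOpen_interior z hz
  have hzc : z ∈ closure S := interior_subset hz
  have hballc : ball z ε ⊆ closure S := hball.trans interior_subset
  obtain ⟨x, hxS, hxz⟩ := Metric.mem_closure_iff.1 hzc (ε/4) (by linarith)
  obtain ⟨y, hyx, hyne, hy⟩ := hp x hxS (ε/4) (by linarith)
  have hdpos : 0 < dist x y := dist_pos.2 (fun h => hyne h.symm)
  have hrpos : 0 < lam * dist x y := by positivity
  have hsub : ball y (lam * dist x y) ⊆ ball z ε := by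
    intro u hu
    rw [mem_ball] at hu hyx ⊢
    have h1' : lam * dist x y < dist x y := by nlinarith
    have t1 := dist_triangle u y z
    have t2 := dist_triangle y x z
    have e1 : dist y x = dist x y := dist_comm y x
    have e2 : dist x z = dist z x := dist_comm x z
    linarith
  have hyc : y ∈ closure S := hballc (hsub (mem_ball_self hrpos))
  obtain ⟨s, hsS, hsy⟩ := Metric.mem_closure_iff.1 hyc _ hrpos
  have : s ∈ ball y (lam * dist x y) ∩ S := ⟨by rwa [mem_ball, dist_comm], hsS⟩
  rw [hy] at this
  exact this

lemma SigmaPorous.isMeagre' {X : Type*} [MetricSpace X] {E : Set X} (h : SigmaPorous E) :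
    IsMeagre E := by
  obtain ⟨S, hS, rfl⟩ := h
  refine isMeagre_iUnion (fun n => ?_)
  obtain ⟨lam, h0, h1, hp⟩ := hS n
  rw [isMeagre_iff_countable_union_isNowhereDense]
  exact ⟨{S n}, by simpa using hp.isNowhereDense' h0 h1, Set.countable_singleton _, by simp⟩

/-- If `α^n(F) ∩ F = ∅` for `n ≥ N` and `β = inf {∏_{k=1}^n w(α^{-k} t) : n ≥ N, t ∈ F} > 0`
for a Borel set `F` with `0 < μ(F) < ∞`, then
`{f ∈ L^∞ : ‖T^n f - χ_F‖_∞ ≥ 1 for all n ≥ N}` is not `σ`-porous. -/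
theorem stmt_16 {Ω : Type*} [TopologicalSpace Ω] [T2Space Ω] [LocallyCompactSpace Ω]
    [MeasurableSpace Ω] [BorelSpace Ω] (μ : Measure Ω) [μ.Regular]
    (w : Ω → ℝ) (hw0 : ∀ x, 0 < w x) (hwm : Measurable w) (hwb : ∃ C, ∀ x, w x ≤ C)
    (α : Ω ≃ Ω) (hα : Measurable α) (hα' : Measurable α.symm)
    (hnorm : ∀ f : Ω → ℂ, eLpNorm (f ∘ ⇑α) ⊤ μ = eLpNorm f ⊤ μ ∧
      eLpNorm (f ∘ ⇑α.symm) ⊤ μ = eLpNorm f ⊤ μ)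
    (F : Set Ω) (hFm : MeasurableSet F) (hF0 : 0 < μ F) (hFfin : μ F < ⊤)
    (N : ℕ) (hN : 0 < N)
    (hdisj : ∀ n ≥ N, Disjoint ((⇑α)^[n] '' F) F)
    (hβ : ∃ β > (0 : ℝ), ∀ n ≥ N, ∀ t ∈ F,
      β ≤ ∏ k ∈ Finset.Icc 1 n, w ((⇑α.symm)^[k] t)) :
    ¬ SigmaPorous {f : Lp ℂ ⊤ μ | ∀ n ≥ N,
      1 ≤ eLpNorm (fun x => TinfPow α w n (⇑f) x - F.indicator (fun _ => (1 : ℂ)) x) ⊤ μ} := by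
  classical
  intro hsig
  obtain ⟨β, hβ0, hβle⟩ := hβ
  -- iterated norm preservation
  have hnA : ∀ (n : ℕ) (f : Ω → ℂ), eLpNorm (f ∘ (⇑α)^[n]) ⊤ μ = eLpNorm f ⊤ μ := by
    intro n
    induction n with
    | zero => intro f; simp
    | succ n ih =>
      intro f
      have heq : f ∘ (⇑α)^[n + 1] = (f ∘ (⇑α)^[n]) ∘ ⇑α := by
        ext x; simp [Function.comp, Function.iterate_succ_apply]
      rw [heq, (hnorm _).1, ih]
  have hnS : ∀ (n : ℕ) (f : Ω → ℂ), eLpNorm (f ∘ (⇑α.symm)^[n]) ⊤ μ = eLpNorm f ⊤ μ := by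
    intro n
    induction n with
    | zero => intro f; simp
    | succ n ih =>
      intro f
      have heq : f ∘ (⇑α.symm)^[n + 1] = (f ∘ (⇑α.symm)^[n]) ∘ ⇑α.symm := by
        ext x; simp [Function.comp, Function.iterate_succ_apply]
      rw [heq, (hnorm _).2, ih]
  have hLI : ∀ n : ℕ, Function.LeftInverse ((⇑α)^[n]) ((⇑α.symm)^[n]) :=
    fun n => Function.LeftInverse.iterate α.apply_symm_apply n
  -- pulling back a.e. properties along α^[n]
  have hpull : ∀ (n : ℕ) (P : Ω → Prop), (∀ᵐ x ∂μ, P x) →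
      (∀ᵐ x ∂μ, P ((⇑α)^[n] x)) := by
    intro n P hP
    set g : Ω → ℂ := fun x => if P x then 0 else 1 with hgdef
    have hg0 : g =ᵐ[μ] 0 := by
      filter_upwards [hP] with x hx
      simp [hgdef, hx]
    have h1 : eLpNorm (g ∘ (⇑α)^[n]) ⊤ μ = 0 := by
      rw [hnA n g, eLpNorm_exponent_top, eLpNormEssSup_eq_zero_iff]
      exact hg0
    rw [eLpNorm_exponent_top, eLpNormEssSup_eq_zero_iff] at h1
    filter_upwards [h1] with x hx
    by_contra h
    simp only [Function.comp_apply, Pi.zero_apply, hgdef] at hx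
    rw [if_neg h] at hx
    exact one_ne_zero hx
  -- a.e. zero indicator implies null set
  have hind0 : ∀ A : Set Ω, (A.indicator (fun _ => (1 : ℂ)) =ᵐ[μ] 0) → μ A = 0 := by
    intro A hA
    rw [measure_eq_zero_iff_ae_notMem]
    filter_upwards [hA] with x hx hxA
    rw [Set.indicator_of_mem hxA, Pi.zero_apply] at hx
    exact one_ne_zero hx
  -- the preimages of F have positive measure
  have hApos : ∀ n : ℕ, 0 < μ ((⇑α.symm)^[n] '' F) := by
    intro n
    rcases (zero_le : 0 ≤ μ ((⇑α.symm)^[n] '' F)).lt_or_eq with h | h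
    · exact h
    have hA : ((⇑α.symm)^[n] '' F).indicator (fun _ => (1 : ℂ)) =ᵐ[μ] 0 := by
      have := measure_eq_zero_iff_ae_notMem.1 h.symm
      filter_upwards [this] with x hx
      simp only [Set.indicator_of_notMem hx, Pi.zero_apply]
    have key : F.indicator (fun _ => (1 : ℂ)) =
        (((⇑α.symm)^[n] '' F).indicator (fun _ => (1 : ℂ))) ∘ (⇑α.symm)^[n] := by
      ext x
      have hmem : (⇑α.symm)^[n] x ∈ (⇑α.symm)^[n] '' F ↔ x ∈ F :=
        (α.symm.injective.iterate n).mem_set_image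
      by_cases hx : x ∈ F
      · simp only [Function.comp_apply, Set.indicator_of_mem hx,
          Set.indicator_of_mem (hmem.2 hx)]
      · simp only [Function.comp_apply, Set.indicator_of_notMem hx,
          Set.indicator_of_notMem (fun hc => hx (hmem.1 hc))]
    have h0 : eLpNorm (F.indicator (fun _ => (1 : ℂ))) ⊤ μ = 0 := by
      rw [key, hnS, eLpNorm_exponent_top, eLpNormEssSup_eq_zero_iff]
      exact hA
    rw [eLpNorm_exponent_top, eLpNormEssSup_eq_zero_iff] at h0
    exact absurd (hind0 F h0) hF0.ne'
  -- lower bound criterion for eLpNorm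
  have hlow : ∀ (h : Ω → ℂ) (A : Set Ω), 0 < μ A →
      (∀ᵐ x ∂μ, x ∈ A → 1 ≤ ‖h x‖) → 1 ≤ eLpNorm h ⊤ μ := by
    intro h A hA hae
    by_contra hc
    push_neg at hc
    rw [eLpNorm_exponent_top, eLpNormEssSup] at hc
    have hlt := ae_lt_of_essSup_lt hc
    have hnm : ∀ᵐ x ∂μ, x ∉ A := by
      filter_upwards [hlt, hae] with x h1 h2 hxA
      have h3 : (1 : ℝ≥0∞) ≤ (‖h x‖₊ : ℝ≥0∞) := by
        rw [← enorm_eq_nnnorm, ← ofReal_norm, ← ENNReal.ofReal_one]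
        exact ENNReal.ofReal_le_ofReal (h2 hxA)
      exact absurd h1 (not_lt.2 h3)
    exact absurd (measure_eq_zero_iff_ae_notMem.2 hnm) hA.ne'
  -- the product estimate
  have hprod : ∀ n ≥ N, ∀ t ∈ F,
      β ≤ ∏ k ∈ Finset.range n, w ((⇑α)^[k] ((⇑α.symm)^[n] t)) := by
    intro n hn t ht
    have hcongr : ∀ k ∈ Finset.range n,
        w ((⇑α)^[k] ((⇑α.symm)^[n] t)) = w ((⇑α.symm)^[n - k] t) := by
      intro k hk
      have hk' : k < n := Finset.mem_range.1 hk
      have hsplit : (⇑α.symm)^[n] t = (⇑α.symm)^[k] ((⇑α.symm)^[n - k] t) := by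
        rw [← Function.iterate_add_apply]
        congr 1
        omega
      rw [hsplit, hLI k _]
    rw [Finset.prod_congr rfl hcongr]
    have hre : ∏ k ∈ Finset.range n, w ((⇑α.symm)^[n - k] t) =
        ∏ j ∈ Finset.Icc 1 n, w ((⇑α.symm)^[j] t) := by
      rw [← Finset.Ico_add_one_right_eq_Icc, Finset.prod_Ico_eq_prod_range]
      simp only [Nat.add_sub_cancel]
      rw [← Finset.prod_range_reflect (fun j => w ((⇑α.symm)^[1 + j] t)) n]
      refine Finset.prod_congr rfl (fun k hk => ?_)
      have hk' : k < n := Finset.mem_range.1 hk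
      congr 2
      omega
    rw [hre]
    exact hβle n hn t ht
  -- construct the center of the ball
  have hM : (0 : ℝ) < 2 / β := by positivity
  set M : ℝ := 2 / β with hMdef
  set f0fun : Ω → ℂ := F.indicator (fun _ => ((M : ℝ) : ℂ)) with hf0def
  have hmem : MemLp f0fun ⊤ μ := by
    refine memLp_top_of_bound ((measurable_const.indicator hFm).aestronglyMeasurable) M ?_
    refine Filter.Eventually.of_forall (fun x => ?_)
    by_cases hx : x ∈ F
    · rw [hf0def, Set.indicator_of_mem hx]
      rw [Complex.norm_real, Real.norm_of_nonneg hM.le]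
    · rw [hf0def, Set.indicator_of_notMem hx]
      simp [le_of_lt hM]
  set f₀ : Lp ℂ ⊤ μ := hmem.toLp f0fun with hf₀def
  have hf₀ : ⇑f₀ =ᵐ[μ] f0fun := hmem.coeFn_toLp
  set r : ℝ := 1 / β with hrdef
  have hr : 0 < r := by positivity
  -- the ball is contained in the set E
  set E := {f : Lp ℂ ⊤ μ | ∀ n ≥ N,
      1 ≤ eLpNorm (fun x => TinfPow α w n (⇑f) x - F.indicator (fun _ => (1 : ℂ)) x) ⊤ μ} with hEdef
  have hball : ball f₀ r ⊆ E := by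
    intro g hg
    rw [mem_ball, Lp.dist_def] at hg
    have hsub : ⇑(g - f₀) =ᵐ[μ] ⇑g - ⇑f₀ := Lp.coeFn_sub g f₀
    have hcong : eLpNorm (⇑(g - f₀)) ⊤ μ = eLpNorm (⇑g - ⇑f₀) ⊤ μ := eLpNorm_congr_ae hsub
    have hfin : eLpNorm (⇑g - ⇑f₀) ⊤ μ ≠ ⊤ := by
      rw [← hcong]; exact Lp.eLpNorm_ne_top _
    have hglt : eLpNorm (⇑g - ⇑f₀) ⊤ μ < ENNReal.ofReal r :=
      (ENNReal.lt_ofReal_iff_toReal_lt hfin).2 hg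
    -- a.e. pointwise bound on g over F
    have haeg : ∀ᵐ x ∂μ, x ∈ F → 1 / β ≤ ‖(⇑g) x‖ := by
      have hae1 : ∀ᵐ x ∂μ, (‖(⇑g - ⇑f₀) x‖₊ : ℝ≥0∞) ≤ eLpNorm (⇑g - ⇑f₀) ⊤ μ := by
        rw [eLpNorm_exponent_top, eLpNormEssSup]
        exact ENNReal.ae_le_essSup _
      filter_upwards [hae1, hf₀] with x h1 h3 hxF
      have hlt : (‖(⇑g - ⇑f₀) x‖₊ : ℝ≥0∞) < ENNReal.ofReal r := lt_of_le_of_lt h1 hglt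
      rw [← enorm_eq_nnnorm, ← ofReal_norm] at hlt
      have hnlt : ‖(⇑g - ⇑f₀) x‖ < r :=
        (ENNReal.ofReal_lt_ofReal_iff hr).1 hlt
      rw [Pi.sub_apply, h3, hf0def, Set.indicator_of_mem hxF] at hnlt
      have hnM : ‖((M : ℝ) : ℂ)‖ = M := by
        rw [Complex.norm_real, Real.norm_of_nonneg hM.le]
      have htri : ‖((M : ℝ) : ℂ)‖ - ‖(⇑g) x‖ ≤ ‖(⇑g) x - ((M : ℝ) : ℂ)‖ := by
        have := norm_sub_norm_le (((M : ℝ) : ℂ)) ((⇑g) x)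
        rw [norm_sub_rev] at this
        exact this
      rw [hnM] at htri
      have h4 : M - r ≤ ‖(⇑g) x‖ := by linarith
      have h5 : (1 : ℝ) / β = M - r := by rw [hMdef, hrdef]; ring
      linarith
    intro n hn
    refine hlow _ ((⇑α.symm)^[n] '' F) (hApos n) ?_
    have hp := hpull n _ haeg
    filter_upwards [hp] with x hPx hxA
    obtain ⟨t, htF, hxt⟩ := hxA
    have hax : (⇑α)^[n] x = t := by rw [← hxt]; exact hLI n t
    have hxF : x ∉ F := by
      intro hxF
      exact Set.disjoint_left.1 (hdisj n hn) ⟨x, hxF, hax⟩ htF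
    rw [Set.indicator_of_notMem hxF, sub_zero]
    have hgt : 1 / β ≤ ‖(⇑g) ((⇑α)^[n] x)‖ := hPx (by rw [hax]; exact htF)
    have hprodx : β ≤ ∏ k ∈ Finset.range n, w ((⇑α)^[k] x) := by
      rw [← hxt]; exact hprod n hn t htF
    rw [TinfPow, norm_mul]
    have hcoe : ‖∏ k ∈ Finset.range n, ((w ((⇑α)^[k] x) : ℝ) : ℂ)‖ =
        ∏ k ∈ Finset.range n, w ((⇑α)^[k] x) := by
      rw [← Complex.ofReal_prod, Complex.norm_real,
        Real.norm_of_nonneg (Finset.prod_pos (fun k _ => hw0 _)).le]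
    rw [hcoe]
    calc (1 : ℝ) = β * (1 / β) := by field_simp
    _ ≤ (∏ k ∈ Finset.range n, w ((⇑α)^[k] x)) * ‖(⇑g) ((⇑α)^[n] x)‖ :=
        mul_le_mul hprodx hgt (by positivity) (le_trans hβ0.le hprodx)
  -- conclude via Baire category
  have hmeagre : IsMeagre E := hsig.isMeagre'
  have hmb : IsMeagre (ball f₀ r) := hmeagre.mono hball
  have hres : (ball f₀ r)ᶜ ∈ residual _ := hmb
  have hdense : Dense (ball f₀ r)ᶜ := dense_of_mem_residual hres
  have hclosed : IsClosed (ball f₀ r)ᶜ := isOpen_ball.isClosed_compl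
  have huniv : (ball f₀ r)ᶜ = Set.univ := by
    rw [← hclosed.closure_eq]
    exact hdense.closure_eq
  have : f₀ ∈ (ball f₀ r)ᶜ := huniv ▸ Set.mem_univ f₀
  exact this (mem_ball_self hr)
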